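/- Let C, H, Λ be real numbers and set A = −2C. Define f₁(x,y,z) = y² + 2C(z + Λ/(C²+1)) y + (C²+1) z² + 2Λ(C²−1) z/(C²+1) + Λ²/(C²+1), f₂(x,y,z) = x − H(Az + y), and P(x,y,z) = f₁(x,y,z)·f₂(x,y,z). Then for all real x, y the polynomial identity P(x,y,0) − P(−y,−x,0) = −(x+y)·[ H(x² + y²) − (H+1)xy + 2CHΛ(y−x)/(C²+1) + Λ²(H−1)/(C²+1) ] holds. In particular, under the resonance A = −2C, the symmetric crossing points of a periodic orbit on the switching plane {z=0}, other than those on the line x+y=0, lie on the conic Γ₁ = { (x,y) : H(x²+y²) − (H+1)xy + 2CHΛ(y−x)/(C²+1) + Λ²(H−1)/(C²+1) = 0 }. -/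
import Mathlib


/-- f₁ evaluated at (x, y, z). -/
noncomputable def fOne (C Λ x y z : ℝ) : ℝ :=
  y ^ 2 + 2 * C * (z + Λ / (C ^ 2 + 1)) * y + (C ^ 2 + 1) * z ^ 2 +
    2 * Λ * (C ^ 2 - 1) * z / (C ^ 2 + 1) + Λ ^ 2 / (C ^ 2 + 1)

/-- f₂ evaluated at (x, y, z), with A = −2C. -/
noncomputable def fTwo (C H x y z : ℝ) : ℝ :=
  x - H * ((-2 * C) * z + y)

/-- The resonant polynomial first integral P = f₁·f₂. -/
noncomputable def Pres (C H Λ x y z : ℝ) : ℝ := fOne C Λ x y z * fTwo C H x y z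

/-- The defining polynomial of the conic Γ₁. -/
noncomputable def gConic (C H Λ x y : ℝ) : ℝ :=
  H * (x ^ 2 + y ^ 2) - (H + 1) * x * y + 2 * C * H * Λ * (y - x) / (C ^ 2 + 1) +
    Λ ^ 2 * (H - 1) / (C ^ 2 + 1)

/-- The matching identity P(x,y,0) − P(−y,−x,0) = −(x+y)·g(x,y); hence symmetric
crossing points off the line x + y = 0 lie on the conic Γ₁. -/
theorem matching_identity (C H Λ : ℝ) :
    (∀ x y : ℝ, Pres C H Λ x y 0 - Pres C H Λ (-y) (-x) 0 = -(x + y) * gConic C H Λ x y) ∧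
    (∀ x y : ℝ, x + y ≠ 0 → Pres C H Λ x y 0 - Pres C H Λ (-y) (-x) 0 = 0 →
      gConic C H Λ x y = 0) := by
  have key : ∀ x y : ℝ, Pres C H Λ x y 0 - Pres C H Λ (-y) (-x) 0 =
      -(x + y) * gConic C H Λ x y := by
    intro x y
    have h : (C : ℝ) ^ 2 + 1 ≠ 0 := by positivity
    unfold Pres fOne fTwo gConic
    field_simp
    ring
  refine ⟨key, fun x y hxy h0 => ?_⟩
  have := key x y
  rw [h0] at this
  have := this.symm
  rcases mul_eq_zero.mp this with h | h
  · exact absurd (neg_eq_zero.mp h) hxy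
  · exact h
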